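/- arXiv:math/0610977 — 8 statements merged into one kernel-verified Lean document; each statement's English description precedes it below -/
import Mathlib

section
/- Let n, d be positive integers with d ≥ 2, and let r be a positive integer with r ≥ d and (d-1)/d · (n-1) < r ≤ (d-1)/d · n. Then there exists a function f : Fin n → ℝ with ∑_{x} f(x) ≥ 0, having exactly r indices with f(x) ≥ 0, such that the number of d-element subsets Y of Fin n with ∑_{y ∈ Y} f(y) ≥ 0 is exactly C(r,d) + C(r,d-1). -/
open Finset

private lemma card_filter_val_lt (n k : ℕ) (hk : k ≤ n) :
    (univ.filter fun x : Fin n => (x : ℕ) < k).card = k := by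
  rw [← Finset.card_range k]
  apply Finset.card_bij (fun (x : Fin n) _ => (x : ℕ))
  · intro a ha
    simp only [Finset.mem_filter] at ha
    simpa using ha.2
  · intro a _ b _ h
    exact Fin.val_injective h
  · intro b hb
    simp only [Finset.mem_range] at hb
    exact ⟨⟨b, lt_of_lt_of_le hb hk⟩, by simp [hb], rfl⟩

open Finset in
theorem stmt_3 (n d r : ℕ) (hn : 0 < n) (hd : 2 ≤ d) (hr0 : 0 < r) (hrd : d ≤ r)
    (h1 : ((d : ℝ) - 1) / d * ((n : ℝ) - 1) < r)
    (h2 : (r : ℝ) ≤ ((d : ℝ) - 1) / d * n) :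
    ∃ f : Fin n → ℝ, 0 ≤ ∑ x, f x ∧
      (univ.filter fun x => 0 ≤ f x).card = r ∧
      ((univ.powersetCard d).filter fun Y => 0 ≤ ∑ y ∈ Y, f y).card
        = r.choose d + r.choose (d - 1) := by
  have hd0 : (0:ℝ) < d := by exact_mod_cast (by omega : 0 < d)
  rw [div_mul_eq_mul_div, div_lt_iff₀ hd0] at h1
  rw [div_mul_eq_mul_div, le_div_iff₀ hd0] at h2
  have hZ1 : ((d:ℤ) - 1) * ((n:ℤ) - 1) < (r:ℤ) * d := by exact_mod_cast h1
  have hZ2 : (r:ℤ) * d ≤ ((d:ℤ) - 1) * n := by exact_mod_cast h2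
  have hdZ : (2:ℤ) ≤ d := by exact_mod_cast hd
  have hnZ : (1:ℤ) ≤ n := by exact_mod_cast hn
  have hrn : r < n := by
    by_contra hc
    push_neg at hc
    have hcz : (n:ℤ) ≤ r := by exact_mod_cast hc
    nlinarith
  set m1 : ℕ := n - r - 1 with hm1def
  have hm1Z : (m1:ℤ) = (n:ℤ) - r - 1 := by
    have : m1 + r + 1 = n := by omega
    push_cast [← this]; ring
  have hZ3 : ((d:ℤ) - 1) * m1 ≤ (r:ℤ) - 1 := by rw [hm1Z]; nlinarith
  set q : ℝ := ((r:ℝ) - 1/2) / m1 with hqdef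
  have hr1 : (1:ℝ) ≤ r := by exact_mod_cast hr0
  have hq0 : 0 ≤ q := div_nonneg (by linarith) (Nat.cast_nonneg _)
  have hq : 1 ≤ m1 → (d:ℝ) - 1 < q := by
    intro hm
    have hmR : (0:ℝ) < m1 := by exact_mod_cast hm
    rw [hqdef, lt_div_iff₀ hmR]
    have hR3 : ((d:ℝ) - 1) * m1 ≤ (r:ℝ) - 1 := by exact_mod_cast hZ3
    linarith
  set g : ℕ → ℝ := fun i => if i < r then 1 else if i = r then -(1/2) else -q with hgdef
  set f : Fin n → ℝ := fun x => g (x : ℕ) with hfdef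
  have hg1 : ∀ i, i < r → g i = 1 := fun i hi => by simp [hgdef, hi]
  have hgr : g r = -(1/2) := by simp [hgdef]
  have hgq : ∀ i, r < i → g i = -q := by
    intro i hi
    rw [hgdef]
    simp only
    rw [if_neg (by omega), if_neg (by omega)]
  have hf1 : ∀ x : Fin n, f x ≤ 1 := by
    intro x
    rcases lt_trichotomy (x : ℕ) r with h | h | h
    · rw [hfdef]; simp only; rw [hg1 _ h]
    · rw [hfdef]; simp only; rw [h, hgr]; norm_num
    · rw [hfdef]; simp only; rw [hgq _ h]; linarith
  -- total sum
  have hsum : ∑ x, f x = (r:ℝ) - 1/2 - m1 * q := by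
    rw [hfdef]
    rw [Fin.sum_univ_eq_sum_range g n]
    rw [show n = r + 1 + m1 by omega, Finset.sum_range_add, Finset.sum_range_succ]
    have e1 : ∑ i ∈ range r, g i = (r:ℝ) := by
      rw [Finset.sum_congr rfl (fun i hi => hg1 i (Finset.mem_range.mp hi))]
      simp
    have e2 : ∑ i ∈ range m1, g (r + 1 + i) = -(m1 * q) := by
      rw [Finset.sum_congr rfl (fun i _ => hgq (r + 1 + i) (by omega))]
      simp [mul_comm]
    rw [e1, hgr, e2]; ring
  have hsum0 : 0 ≤ ∑ x, f x := by
    rw [hsum]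
    rcases Nat.eq_zero_or_pos m1 with hm | hm
    · rw [hm]; push_cast; linarith
    · have hmne : (m1:ℝ) ≠ 0 := by positivity
      rw [hqdef, mul_div_cancel₀ _ hmne]
      linarith
  -- key characterization
  have key : ∀ Y : Finset (Fin n), Y.card = d →
      (0 ≤ ∑ y ∈ Y, f y ↔ ∀ y ∈ Y, (y : ℕ) < r + 1) := by
    intro Y hY
    constructor
    · intro hs y hyY
      by_contra hgt
      push_neg at hgt
      have hgt' : r < (y : ℕ) := by omega
      have hm : 1 ≤ m1 := by have := y.isLt; omega
      have hqd := hq hm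
      have hfy : f y = -q := by rw [hfdef]; simp only; exact hgq _ hgt'
      have hrest : ∑ x ∈ Y.erase y, f x ≤ ((d:ℝ) - 1) := by
        calc ∑ x ∈ Y.erase y, f x ≤ (Y.erase y).card • (1:ℝ) :=
              Finset.sum_le_card_nsmul _ _ _ (fun x _ => hf1 x)
          _ = ((d - 1 : ℕ) : ℝ) := by
              rw [Finset.card_erase_of_mem hyY, hY]; simp
          _ ≤ (d:ℝ) - 1 := by
              have : ((d - 1 : ℕ) : ℝ) = (d:ℝ) - 1 := by
                push_cast [Nat.cast_sub (by omega : 1 ≤ d)]; ring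
              rw [this]
      have hsplit : ∑ x ∈ Y, f x = f y + ∑ x ∈ Y.erase y, f x :=
        (Finset.add_sum_erase _ _ hyY).symm
      rw [hsplit, hfy] at hs
      have hd1 : (1:ℝ) ≤ (d:ℝ) - 1 := by
        have : (2:ℝ) ≤ d := by exact_mod_cast hd
        linarith
      linarith
    · intro hsub
      by_cases hy1 : (⟨r, hrn⟩ : Fin n) ∈ Y
      · have hsplit : ∑ x ∈ Y, f x = f ⟨r, hrn⟩ + ∑ x ∈ Y.erase ⟨r, hrn⟩, f x :=
          (Finset.add_sum_erase _ _ hy1).symm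
        have hone : ∀ x ∈ Y.erase (⟨r, hrn⟩ : Fin n), f x = 1 := by
          intro x hx
          have hne := Finset.ne_of_mem_erase hx
          have hxY := Finset.mem_of_mem_erase hx
          have hlt : (x : ℕ) < r := by
            have hle := hsub x hxY
            rcases Nat.lt_or_ge (x : ℕ) r with h | h
            · exact h
            · exfalso; apply hne; apply Fin.ext; simp; omega
          rw [hfdef]; simp only; exact hg1 _ hlt
        have hc : (Y.erase (⟨r, hrn⟩ : Fin n)).card = d - 1 := by
          rw [Finset.card_erase_of_mem hy1, hY]
        have : ∑ x ∈ Y.erase (⟨r, hrn⟩ : Fin n), f x = ((d - 1 : ℕ) : ℝ) := by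
          rw [Finset.sum_congr rfl hone, Finset.sum_const, hc, nsmul_eq_mul, mul_one]
        rw [hsplit, this]
        have hfr : f (⟨r, hrn⟩ : Fin n) = -(1/2) := by rw [hfdef]; simp only; exact hgr
        have hcast : ((d - 1 : ℕ) : ℝ) = (d:ℝ) - 1 := by
          push_cast [Nat.cast_sub (by omega : 1 ≤ d)]; ring
        have hdR : (2:ℝ) ≤ d := by exact_mod_cast hd
        rw [hfr, hcast]
        linarith
      · have hone : ∀ x ∈ Y, f x = 1 := by
          intro x hx
          have hle := hsub x hx
          have hlt : (x : ℕ) < r := by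
            rcases Nat.lt_or_ge (x : ℕ) r with h | h
            · exact h
            · exfalso; apply hy1
              have : x = (⟨r, hrn⟩ : Fin n) := by apply Fin.ext; simp; omega
              rwa [← this]
          rw [hfdef]; simp only; exact hg1 _ hlt
        rw [Finset.sum_congr rfl hone, Finset.sum_const, hY, nsmul_eq_mul, mul_one]
        exact_mod_cast Nat.zero_le d
  refine ⟨f, hsum0, ?_, ?_⟩
  · -- number of nonnegative indices
    have hset : (univ.filter fun x => 0 ≤ f x) = (univ.filter fun x : Fin n => (x : ℕ) < r) := by
      ext x
      simp only [Finset.mem_filter, Finset.mem_univ, true_and]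
      constructor
      · intro h0
        by_contra hge
        push_neg at hge
        rcases Nat.lt_or_ge r (x : ℕ) with h | h
        · have hm : 1 ≤ m1 := by have := x.isLt; omega
          have := hq hm
          have hfx : f x = -q := by rw [hfdef]; simp only; exact hgq _ h
          have hdR : (2:ℝ) ≤ d := by exact_mod_cast hd
          rw [hfx] at h0
          linarith
        · have hxr : (x : ℕ) = r := by omega
          have hfx : f x = -(1/2) := by rw [hfdef]; simp only; rw [hxr]; exact hgr
          rw [hfx] at h0
          linarith
      · intro h
        have : f x = 1 := by rw [hfdef]; simp only; exact hg1 _ h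
        rw [this]; norm_num
    rw [hset, card_filter_val_lt n r (le_of_lt hrn)]
  · -- number of nonnegative d-subsets
    have hset : (univ.powersetCard d).filter (fun Y => 0 ≤ ∑ y ∈ Y, f y)
        = (univ.filter fun x : Fin n => (x : ℕ) < r + 1).powersetCard d := by
      ext Y
      simp only [Finset.mem_filter, Finset.mem_powersetCard_univ, Finset.mem_powersetCard]
      constructor
      · rintro ⟨⟨_, hcard⟩, hsY⟩
        refine ⟨?_, hcard⟩
        intro y hy
        simp only [Finset.mem_filter, Finset.mem_univ, true_and]
        exact (key Y hcard).mp hsY y hy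
      · rintro ⟨hsub, hcard⟩
        refine ⟨⟨Finset.subset_univ Y, hcard⟩, (key Y hcard).mpr ?_⟩
        intro y hy
        have := hsub hy
        simp only [Finset.mem_filter] at this
        exact this.2
    rw [hset, Finset.card_powersetCard, card_filter_val_lt n (r + 1) hrn]
    obtain ⟨e, rfl⟩ : ∃ e, d = e + 1 := ⟨d - 1, by omega⟩
    rw [Nat.add_sub_cancel, Nat.choose_succ_succ']
    exact Nat.add_comm _ _
end

section
/- Let n, d be positive integers with d ≥ 2, let r be a positive integer with d ≤ r ≤ (d-1)/d · n, and let b be the unique integer in {1,...,n-r-1} with (d-1)/d · (n-b) < r ≤ (d-1)/d · (n-b+1). Then there exists an n-weight function f with f⁺ = r such that φ(f,d) = ∑_{j=0}^{min(b, d-1)} C(b,j) · C(r, d-j). -/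
set_option maxHeartbeats 1000000 in
open Finset in
theorem stmt_4 (n d r b : ℕ) (hn : 0 < n) (hd : 2 ≤ d) (hr0 : 0 < r)
    (hdr : d ≤ r) (hrn : (r : ℝ) ≤ ((d : ℝ) - 1) / d * n)
    (hb1 : 1 ≤ b) (hb2 : b ≤ n - r - 1)
    (hb3 : ((d : ℝ) - 1) / d * ((n : ℝ) - b) < r)
    (hb4 : (r : ℝ) ≤ ((d : ℝ) - 1) / d * ((n : ℝ) - b + 1)) :
    ∃ f : Fin n → ℝ, 0 ≤ ∑ x, f x ∧
      (univ.filter fun x => 0 ≤ f x).card = r ∧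
      ((univ.powersetCard d).filter fun Y => 0 ≤ ∑ y ∈ Y, f y).card
        = ∑ j ∈ Finset.range (min b (d - 1) + 1), b.choose j * r.choose (d - j) := by
  classical
  -- basic nat facts
  have hrbn : r + b + 1 ≤ n := by omega
  have hdn : d < n := by omega
  have hd0 : (0:ℝ) < d := by positivity
  set m : ℕ := n - (r + b) with hm_def
  have hm1 : 1 ≤ m := by omega
  -- key inequality from hb3 : (d-1)*m < r
  have hmr : (d - 1) * m + 1 ≤ r := by
    have h1 : ((d:ℝ) - 1) * ((n:ℝ) - b) < r * d := by
      rw [div_mul_eq_mul_div, div_lt_iff₀ hd0] at hb3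
      linarith
    have h2 : ((d:ℝ) - 1) * (m:ℝ) < r := by
      have hmcast : (m:ℝ) = (n:ℝ) - r - b := by
        rw [hm_def]
        push_cast [Nat.cast_sub (by omega : r + b ≤ n)]
        ring
      nlinarith [hmcast]
    have h3 : ((d - 1 : ℕ):ℝ) * (m:ℝ) < (r:ℝ) := by
      rwa [Nat.cast_sub (by omega : 1 ≤ d), Nat.cast_one]
    have h4 : (d - 1) * m < r := by exact_mod_cast h3
    omega
  set M : ℝ := ((d:ℝ) - 1) * (n:ℝ) + 1 with hM_def
  have hM0 : (0:ℝ) < M := by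
    rw [hM_def]
    have : (1:ℝ) ≤ (d:ℝ) := by exact_mod_cast (by omega : 1 ≤ d)
    nlinarith [Nat.cast_nonneg (α := ℝ) n]
  set f : Fin n → ℝ := fun x =>
    if x.val < r then (n:ℝ) else if x.val < r + b then -1 else -M with hf_def
  -- sum formula over any finset
  have hsum : ∀ Y : Finset (Fin n), ∑ y ∈ Y, f y
      = (#(Y.filter fun y => y.val < r) : ℝ) * n
        + (#(Y.filter fun y => y.val < r + b ∧ ¬ y.val < r) : ℝ) * (-1)
        + (#(Y.filter fun y => ¬ y.val < r + b) : ℝ) * (-M) := by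
    intro Y
    have step : ∀ y ∈ Y, f y = (if y.val < r then (n:ℝ) else 0)
        + (if y.val < r + b ∧ ¬ y.val < r then (-1:ℝ) else 0)
        + (if ¬ y.val < r + b then -M else 0) := by
      intro y _
      rw [hf_def]
      by_cases h1 : y.val < r
      · have h2 : y.val < r + b := by omega
        simp [h1, h2]
      · by_cases h2 : y.val < r + b
        · simp [h1, h2]
        · simp [h1, h2]
    rw [Finset.sum_congr rfl step]
    rw [Finset.sum_add_distrib, Finset.sum_add_distrib]
    rw [← Finset.sum_filter, ← Finset.sum_filter, ← Finset.sum_filter]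
    simp [Finset.sum_const, nsmul_eq_mul, mul_comm]
  -- cards of univ filters
  have hcard_lt : ∀ t : ℕ, t < n → #(univ.filter fun y : Fin n => y.val < t) = t := by
    intro t ht
    have : (univ.filter fun y : Fin n => y.val < t) = Finset.Iio (⟨t, ht⟩ : Fin n) := by
      ext x
      simp [Finset.mem_Iio, Fin.lt_def]
    rw [this, Fin.card_Iio]
  have hck : #(univ.filter fun y : Fin n => y.val < r) = r := hcard_lt r (by omega)
  have hckb : #(univ.filter fun y : Fin n => y.val < r + b) = r + b := hcard_lt (r+b) (by omega)
  have hsplit : ∀ Y : Finset (Fin n),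
      #(Y.filter fun y => y.val < r) + #(Y.filter fun y => y.val < r + b ∧ ¬ y.val < r)
        = #(Y.filter fun y => y.val < r + b) := by
    intro Y
    have h := Finset.card_filter_add_card_filter_not
      (s := Y.filter fun y : Fin n => y.val < r + b) (fun y : Fin n => y.val < r)
    rw [Finset.filter_filter, Finset.filter_filter] at h
    have e1 : (Y.filter fun y : Fin n => y.val < r + b ∧ y.val < r)
        = Y.filter fun y => y.val < r := by
      apply Finset.filter_congr
      intro y _
      constructor
      · exact fun h => h.2
      · intro h; exact ⟨by omega, h⟩
    rw [e1] at h
    exact h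
  have hsplit2 : ∀ Y : Finset (Fin n),
      #(Y.filter fun y => y.val < r + b) + #(Y.filter fun y => ¬ y.val < r + b) = #Y := by
    intro Y
    exact Finset.card_filter_add_card_filter_not (fun y : Fin n => y.val < r + b)
  have hcmid : #(univ.filter fun y : Fin n => y.val < r + b ∧ ¬ y.val < r) = b := by
    have := hsplit univ
    omega
  have hclast : #(univ.filter fun y : Fin n => ¬ y.val < r + b) = m := by
    have := hsplit2 univ
    rw [hckb, Finset.card_univ, Fintype.card_fin] at this
    omega
  refine ⟨f, ?_, ?_, ?_⟩
  · -- total sum nonneg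
    rw [hsum univ, hck, hcmid, hclast]
    have c1' : ((d:ℝ) - 1) * m + 1 ≤ (r:ℝ) := by
      have h5 : (((d - 1) * m + 1 : ℕ) : ℝ) ≤ (r:ℝ) := by exact_mod_cast hmr
      rwa [Nat.cast_add, Nat.cast_mul, Nat.cast_sub (by omega : 1 ≤ d), Nat.cast_one] at h5
    have c2 : (b:ℝ) + (m:ℝ) + (r:ℝ) = (n:ℝ) := by
      have : b + m + r = n := by omega
      exact_mod_cast this
    have hn1 : (1:ℝ) ≤ (n:ℝ) := by exact_mod_cast hn
    rw [hM_def]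
    nlinarith [mul_le_mul_of_nonneg_right c1' (by positivity : (0:ℝ) ≤ (n:ℝ)),
      Nat.cast_nonneg (α := ℝ) m, Nat.cast_nonneg (α := ℝ) b]
  · -- f⁺ = r
    have : (univ.filter fun x => 0 ≤ f x) = (univ.filter fun y : Fin n => y.val < r) := by
      apply Finset.filter_congr
      intro x _
      rw [hf_def]
      by_cases h1 : x.val < r
      · simp [h1]
      · by_cases h2 : x.val < r + b
        · simp [h1, h2]
        · simp [h1, h2]
          linarith [hM0]
    rw [this, hck]
  · -- the count
    have hchar : ∀ Y : Finset (Fin n), #Y = d →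
        (0 ≤ ∑ y ∈ Y, f y ↔ ((∀ y ∈ Y, y.val < r + b) ∧ ∃ y ∈ Y, y.val < r)) := by
      intro Y hY
      set k := #(Y.filter fun y : Fin n => y.val < r) with hk_def
      set j := #(Y.filter fun y : Fin n => y.val < r + b ∧ ¬ y.val < r) with hj_def
      set l := #(Y.filter fun y : Fin n => ¬ y.val < r + b) with hl_def
      have hkjl : k + j + l = d := by
        have h1 := hsplit Y
        have h2 := hsplit2 Y
        omega
      rw [hsum Y, ← hk_def, ← hj_def, ← hl_def]
      have hd1 : ((d:ℝ) - 1) ≥ 1 := by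
        have : (2:ℝ) ≤ (d:ℝ) := by exact_mod_cast hd
        linarith
      have hncast : (d:ℝ) ≤ (n:ℝ) := by exact_mod_cast (by omega : d ≤ n)
      constructor
      · intro h0
        have hl0 : l = 0 := by
          by_contra hl1
          have hkd : k ≤ d - 1 := by omega
          have ck : (k:ℝ) ≤ (d:ℝ) - 1 := by
            have : (k:ℝ) ≤ ((d - 1 : ℕ):ℝ) := by exact_mod_cast hkd
            rwa [Nat.cast_sub (by omega : 1 ≤ d), Nat.cast_one] at this
          have cl : (1:ℝ) ≤ (l:ℝ) := by exact_mod_cast (by omega : 1 ≤ l)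
          have cj : (0:ℝ) ≤ (j:ℝ) := Nat.cast_nonneg j
          rw [hM_def] at h0
          nlinarith [mul_le_mul_of_nonneg_right ck (by positivity : (0:ℝ) ≤ (n:ℝ)),
            mul_le_mul_of_nonneg_right cl (by nlinarith : (0:ℝ) ≤ ((d:ℝ)-1)*(n:ℝ)+1)]
        have hk1 : 1 ≤ k := by
          by_contra hk0
          have : k = 0 := by omega
          have hjd : j = d := by omega
          rw [this, hjd, hl0] at h0
          have : (2:ℝ) ≤ (d:ℝ) := by exact_mod_cast hd
          push_cast at h0
          nlinarith
        constructor
        · intro y hy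
          by_contra hyc
          have : y ∈ Y.filter fun y : Fin n => ¬ y.val < r + b :=
            Finset.mem_filter.mpr ⟨hy, hyc⟩
          have := Finset.card_pos.mpr ⟨y, this⟩
          omega
        · have := Finset.card_pos.mp (by omega : 0 < k)
          obtain ⟨y, hy⟩ := this
          have := Finset.mem_filter.mp hy
          exact ⟨y, this.1, this.2⟩
      · rintro ⟨hall, y0, hy0, hy0r⟩
        have hl0 : l = 0 := by
          rw [hl_def, Finset.card_eq_zero, Finset.filter_eq_empty_iff]
          intro y hy
          simp only [not_not]
          exact hall y hy
        have hk1 : 1 ≤ k := by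
          apply Finset.card_pos.mpr
          exact ⟨y0, Finset.mem_filter.mpr ⟨hy0, hy0r⟩⟩
        have hjd : j ≤ d - 1 := by omega
        have ck : (1:ℝ) ≤ (k:ℝ) := by exact_mod_cast hk1
        have cj : (j:ℝ) ≤ (d:ℝ) - 1 := by
          have : (j:ℝ) ≤ ((d - 1 : ℕ):ℝ) := by exact_mod_cast hjd
          rwa [Nat.cast_sub (by omega : 1 ≤ d), Nat.cast_one] at this
        rw [hl0]
        push_cast
        nlinarith [mul_le_mul_of_nonneg_right ck (by positivity : (0:ℝ) ≤ (n:ℝ))]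
    -- set equality
    have hSsub : (univ.filter fun y : Fin n => y.val < r + b ∧ ¬ y.val < r)
        ⊆ (univ.filter fun y : Fin n => y.val < r + b) := by
      intro y hy
      rw [Finset.mem_filter] at hy ⊢
      exact ⟨hy.1, hy.2.1⟩
    have hset : (univ.powersetCard d).filter (fun Y => 0 ≤ ∑ y ∈ Y, f y)
        = ((univ.filter fun y : Fin n => y.val < r + b).powersetCard d)
          \ ((univ.filter fun y : Fin n => y.val < r + b ∧ ¬ y.val < r).powersetCard d) := by
      ext Y
      constructor
      · intro hY
        rw [Finset.mem_filter, Finset.mem_powersetCard] at hY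
        obtain ⟨⟨-, hYd⟩, hY0⟩ := hY
        obtain ⟨hall, y0, hy0, hy0r⟩ := (hchar Y hYd).mp hY0
        rw [Finset.mem_sdiff, Finset.mem_powersetCard, Finset.mem_powersetCard]
        refine ⟨⟨?_, hYd⟩, ?_⟩
        · intro y hy
          exact Finset.mem_filter.mpr ⟨Finset.mem_univ y, hall y hy⟩
        · rintro ⟨hsub, -⟩
          have := (Finset.mem_filter.mp (hsub hy0)).2
          omega
      · intro hY
        rw [Finset.mem_sdiff, Finset.mem_powersetCard, Finset.mem_powersetCard] at hY
        obtain ⟨⟨hsub, hYd⟩, hnot⟩ := hY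
        rw [Finset.mem_filter, Finset.mem_powersetCard]
        refine ⟨⟨Finset.subset_univ Y, hYd⟩, (hchar Y hYd).mpr
          ⟨fun y hy => (Finset.mem_filter.mp (hsub hy)).2, ?_⟩⟩
        by_contra hc
        push_neg at hc
        apply hnot
        refine ⟨?_, hYd⟩
        intro y hy
        refine Finset.mem_filter.mpr ⟨Finset.mem_univ y, (Finset.mem_filter.mp (hsub hy)).2, ?_⟩
        have := hc y hy
        omega
    rw [hset, Finset.card_sdiff_of_subset (Finset.powersetCard_mono hSsub),
      Finset.card_powersetCard, Finset.card_powersetCard, hckb, hcmid]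
    -- Vandermonde
    have hvand : (r + b).choose d = ∑ i ∈ Finset.range (d + 1), b.choose i * r.choose (d - i) := by
      rw [add_comm r b, Nat.add_choose_eq, Finset.Nat.sum_antidiagonal_eq_sum_range_succ_mk]
    have hlast : ∑ i ∈ Finset.range (d + 1), b.choose i * r.choose (d - i)
        = (∑ i ∈ Finset.range d, b.choose i * r.choose (d - i)) + b.choose d := by
      rw [Finset.sum_range_succ]
      simp
    have htrunc : ∑ i ∈ Finset.range (min b (d - 1) + 1), b.choose i * r.choose (d - i)
        = ∑ i ∈ Finset.range d, b.choose i * r.choose (d - i) := by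
      apply Finset.sum_subset
      · intro x hx
        simp only [Finset.mem_range] at *
        omega
      · intro x hx hnx
        simp only [Finset.mem_range] at hx hnx
        have : b < x := by omega
        simp [Nat.choose_eq_zero_of_lt this]
    rw [htrunc]
    omega
end

section
/- Let n, d, r be positive integers with d ≤ r ≤ (d-1)/d · n and d ≥ 2. Let f : Fin n → ℝ be an n-weight function with exactly r nonnegative values, arranged so that f(1) ≥ ... ≥ f(r) ≥ 0 > f(r+1) ≥ ... ≥ f(n). If f(1) + f(n) ≥ 0 (the largest value plus the smallest negative value is nonnegative), then φ(f,d) ≥ C(r-1,d-2)·(n-r) + C(r,d). -/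
open Finset

lemma card_filter_fin_aux (n : ℕ) (P : ℕ → Prop) [DecidablePred P] :
    ((univ : Finset (Fin n)).filter fun i => P i.val).card
      = ((Finset.range n).filter P).card := by
  rw [← Finset.card_image_of_injective _ Fin.val_injective]
  congr 1
  ext m
  simp only [Finset.mem_image, Finset.mem_filter, Finset.mem_univ, true_and,
    Finset.mem_range]
  constructor
  · rintro ⟨i, hi, rfl⟩; exact ⟨i.isLt, hi⟩
  · rintro ⟨hm, hP⟩; exact ⟨⟨m, hm⟩, hP, rfl⟩

open Finset in
theorem stmt_5 (n d r : ℕ) (hn : 0 < n) (hd : 2 ≤ d) (hr0 : 0 < r)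
    (hdr : d ≤ r) (hrn : (r : ℝ) ≤ ((d : ℝ) - 1) / d * n)
    (f : Fin n → ℝ) (hsum : 0 ≤ ∑ x, f x)
    (hmono : ∀ i j : Fin n, i ≤ j → f j ≤ f i)
    (hpos : ∀ i : Fin n, (i : ℕ) < r → 0 ≤ f i)
    (hneg : ∀ i : Fin n, r ≤ (i : ℕ) → f i < 0)
    (hfirstlast : 0 ≤ f ⟨0, hn⟩ + f ⟨n - 1, Nat.sub_lt hn one_pos⟩) :
    (r - 1).choose (d - 2) * (n - r) + r.choose d ≤
      ((univ.powersetCard d).filter fun Y => 0 ≤ ∑ y ∈ Y, f y).card := by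
  -- r ≤ n
  have hdpos : (0:ℝ) < d := by positivity
  have hrn' : r ≤ n := by
    have h1 : ((d : ℝ) - 1) / d ≤ 1 := by
      rw [div_le_one hdpos]; linarith
    have : (r : ℝ) ≤ n := le_trans hrn (by
      calc ((d:ℝ)-1)/d * n ≤ 1 * n := by
            apply mul_le_mul_of_nonneg_right h1 (by positivity)
        _ = n := one_mul (n:ℝ))
    exact_mod_cast this
  set z0 : Fin n := ⟨0, hn⟩ with hz0
  set zl : Fin n := ⟨n - 1, Nat.sub_lt hn one_pos⟩ with hzl
  set R : Finset (Fin n) := univ.filter (fun i : Fin n => (i : ℕ) < r) with hR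
  set R' : Finset (Fin n) := univ.filter (fun i : Fin n => 0 < (i : ℕ) ∧ (i : ℕ) < r) with hR'
  set Nneg : Finset (Fin n) := univ.filter (fun i : Fin n => r ≤ (i : ℕ)) with hNneg
  have hRcard : R.card = r := by
    rw [hR, card_filter_fin_aux n (fun m => m < r)]
    have : (Finset.range n).filter (fun m => m < r) = Finset.range r := by
      ext m; simp only [Finset.mem_filter, Finset.mem_range]
      exact ⟨fun h => h.2, fun h => ⟨lt_of_lt_of_le h hrn', h⟩⟩
    rw [this, Finset.card_range]
  have hR'card : R'.card = r - 1 := by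
    rw [hR', card_filter_fin_aux n (fun m => 0 < m ∧ m < r)]
    have : (Finset.range n).filter (fun m => 0 < m ∧ m < r) = Finset.Ico 1 r := by
      ext m; simp only [Finset.mem_filter, Finset.mem_range, Finset.mem_Ico]
      constructor
      · rintro ⟨_, h1, h2⟩; exact ⟨h1, h2⟩
      · rintro ⟨h1, h2⟩; exact ⟨lt_of_lt_of_le h2 hrn', h1, h2⟩
    rw [this, Nat.card_Ico]
  have hNcard : Nneg.card = n - r := by
    rw [hNneg, card_filter_fin_aux n (fun m => r ≤ m)]
    have : (Finset.range n).filter (fun m => r ≤ m) = Finset.Ico r n := by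
      ext m; simp [Finset.mem_Ico, and_comm]
    rw [this, Nat.card_Ico]
  set A : Finset (Finset (Fin n)) := R.powersetCard d with hA
  set g : Finset (Fin n) × Fin n → Finset (Fin n) :=
    fun p => insert z0 (insert p.2 p.1) with hg
  set B : Finset (Finset (Fin n)) := ((R'.powersetCard (d-2)) ×ˢ Nneg).image g with hB
  -- facts about members of the product
  have hprod : ∀ p ∈ (R'.powersetCard (d-2)) ×ˢ Nneg,
      (∀ x ∈ p.1, 0 < (x:ℕ) ∧ (x:ℕ) < r) ∧ p.1.card = d - 2 ∧ r ≤ (p.2 : ℕ) := by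
    rintro ⟨S, j⟩ hp
    rw [Finset.mem_product] at hp
    obtain ⟨hS, hj⟩ := hp
    rw [Finset.mem_powersetCard] at hS
    refine ⟨fun x hx => ?_, hS.2, ?_⟩
    · have := hS.1 hx
      rw [hR', Finset.mem_filter] at this
      exact this.2
    · rw [hNneg, Finset.mem_filter] at hj
      exact hj.2
  -- injectivity of g on the product
  have hinj : Set.InjOn g (((R'.powersetCard (d-2)) ×ˢ Nneg : Finset _) : Set (Finset (Fin n) × Fin n)) := by
    rintro ⟨S, j⟩ hp ⟨S', j'⟩ hq heq
    rw [Finset.mem_coe] at hp hq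
    obtain ⟨hSx, _, hjr⟩ := hprod _ hp
    obtain ⟨hSx', _, hjr'⟩ := hprod _ hq
    replace hSx : ∀ x ∈ S, 0 < (x:ℕ) ∧ (x:ℕ) < r := hSx
    replace hjr : r ≤ (j:ℕ) := hjr
    replace hSx' : ∀ x ∈ S', 0 < (x:ℕ) ∧ (x:ℕ) < r := hSx'
    replace hjr' : r ≤ (j':ℕ) := hjr'
    simp only [hg] at heq
    -- the unique element of g p with val ≥ r is j
    have key : ∀ (T : Finset (Fin n)) (k : Fin n), r ≤ (k:ℕ) →
        (∀ x ∈ T, 0 < (x:ℕ) ∧ (x:ℕ) < r) →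
        ∀ x ∈ insert z0 (insert k T), r ≤ (x:ℕ) → x = k := by
      intro T k hk hT x hx hxr
      rcases Finset.mem_insert.1 hx with h | h
      · exfalso; rw [h, hz0] at hxr; simp at hxr; omega
      · rcases Finset.mem_insert.1 h with h | h
        · exact h
        · exact absurd hxr (by have := (hT x h).2; omega)
    have hj'mem : j' ∈ insert z0 (insert j S) := by
      rw [heq]; exact Finset.mem_insert.2 (Or.inr (Finset.mem_insert_self _ _))
    have hjj : j' = j := key S j hjr hSx j' hj'mem hjr'
    subst hjj
    have hSS : S = S' := by
      ext x
      have hdesc : ∀ (T : Finset (Fin n)),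
          (∀ y ∈ T, 0 < (y:ℕ) ∧ (y:ℕ) < r) →
          ∀ y, (y ∈ T ↔ y ∈ insert z0 (insert j' T) ∧ 0 < (y:ℕ) ∧ (y:ℕ) < r) := by
        intro T hT y
        constructor
        · intro hy
          exact ⟨Finset.mem_insert.2 (Or.inr (Finset.mem_insert.2 (Or.inr hy))), hT y hy⟩
        · rintro ⟨hy, hy1, hy2⟩
          rcases Finset.mem_insert.1 hy with h | h
          · exfalso; rw [h, hz0] at hy1; simp at hy1
          · rcases Finset.mem_insert.1 h with h | h
            · exfalso; rw [h] at hy2; omega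
            · exact h
      rw [hdesc S hSx x, hdesc S' hSx' x, heq]
    simp [hSS]
  have hBcard : B.card = (r - 1).choose (d - 2) * (n - r) := by
    rw [hB, Finset.card_image_of_injOn hinj, Finset.card_product,
      Finset.card_powersetCard, hR'card, hNcard]
  have hAcard : A.card = r.choose d := by
    rw [hA, Finset.card_powersetCard, hRcard]
  -- disjointness
  have hdisj : Disjoint A B := by
    rw [Finset.disjoint_left]
    intro Y hYA hYB
    rw [hA, Finset.mem_powersetCard] at hYA
    rw [hB, Finset.mem_image] at hYB
    obtain ⟨p, hp, rfl⟩ := hYB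
    obtain ⟨_, _, hjr⟩ := hprod _ hp
    have : p.2 ∈ g p := Finset.mem_insert.2 (Or.inr (Finset.mem_insert_self _ _))
    have := hYA.1 this
    rw [hR, Finset.mem_filter] at this
    omega
  -- A ∪ B ⊆ target
  have hsub : A ∪ B ⊆ (univ.powersetCard d).filter fun Y => 0 ≤ ∑ y ∈ Y, f y := by
    intro Y hY
    rw [Finset.mem_filter, Finset.mem_powersetCard_univ]
    rcases Finset.mem_union.1 hY with hYA | hYB
    · rw [hA, Finset.mem_powersetCard] at hYA
      refine ⟨hYA.2, Finset.sum_nonneg fun x hx => ?_⟩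
      have := hYA.1 hx
      rw [hR, Finset.mem_filter] at this
      exact hpos x this.2
    · rw [hB, Finset.mem_image] at hYB
      obtain ⟨p, hp, rfl⟩ := hYB
      obtain ⟨hSx, hScard, hjr⟩ := hprod _ hp
      have hz0S : z0 ∉ insert p.2 p.1 := by
        intro h
        rcases Finset.mem_insert.1 h with h | h
        · have h0 : (p.2:ℕ) = 0 := by rw [← h]
          omega
        · have := (hSx _ h).1; rw [hz0] at this; simp at this
      have hjS : p.2 ∉ p.1 := fun h => by have := (hSx _ h).2; omega
      constructor
      · rw [hg]
        simp only
        rw [Finset.card_insert_of_notMem hz0S, Finset.card_insert_of_notMem hjS, hScard]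
        omega
      · rw [hg]
        simp only
        rw [Finset.sum_insert hz0S, Finset.sum_insert hjS]
        have h1 : 0 ≤ ∑ y ∈ p.1, f y :=
          Finset.sum_nonneg fun x hx => hpos x (hSx x hx).2
        have h2 : f zl ≤ f p.2 := hmono p.2 zl (by
          rw [Fin.le_def]
          show (p.2:ℕ) ≤ n - 1
          exact Nat.le_sub_one_of_lt p.2.isLt)
        linarith [hfirstlast]
  calc (r - 1).choose (d - 2) * (n - r) + r.choose d
      = (A ∪ B).card := by
        rw [Finset.card_union_of_disjoint hdisj, hAcard, hBcard]
        omega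
    _ ≤ _ := Finset.card_le_card hsub
end

section
/- Let q be a positive integer and Ω = {1,...,2q+1}. Then there exists a bijection φ from the set of q-element subsets of Ω to itself such that for every q-element subset A, the image φ(A) is disjoint from A. -/
open Finset

theorem stmt_7 (q : ℕ) (hq : 0 < q) :
    ∃ φ : {A : Finset (Fin (2 * q + 1)) // A.card = q} →
          {A : Finset (Fin (2 * q + 1)) // A.card = q},
      Function.Bijective φ ∧ ∀ A, Disjoint (φ A).1 A.1 := by
  classical
  set Sub := {A : Finset (Fin (2 * q + 1)) // A.card = q} with hSub
  -- key counting: each D has exactly q+1 disjoint partners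
  have key : ∀ D : Sub,
      (Finset.univ.filter (fun B : Sub => Disjoint D.1 B.1)).card = q + 1 := by
    intro D
    have hc : (D.1ᶜ).card = q + 1 := by
      have h := Finset.card_compl D.1
      rw [D.2] at h
      simp only [Fintype.card_fin] at h
      omega
    have hpc : ((D.1ᶜ).powersetCard q).card = q + 1 := by
      rw [Finset.card_powersetCard, hc, Nat.choose_succ_self_right]
    rw [← hpc]
    apply Finset.card_bij (fun B _ => B.1)
    · intro B hB
      simp only [Finset.mem_filter, Finset.mem_univ, true_and] at hB
      rw [Finset.mem_powersetCard]
      exact ⟨le_compl_iff_disjoint_left.mpr hB, B.2⟩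
    · intro B₁ _ B₂ _ h
      exact Subtype.ext h
    · intro S hS
      rw [Finset.mem_powersetCard] at hS
      refine ⟨⟨S, hS.2⟩, ?_, rfl⟩
      simp only [Finset.mem_filter, Finset.mem_univ, true_and]
      exact le_compl_iff_disjoint_left.mp hS.1
    -- note: ordering of arguments of card_bij may need adjusting
  -- Hall condition
  let t : Sub → Finset Sub := fun A => Finset.univ.filter (fun B : Sub => Disjoint A.1 B.1)
  have hall : ∀ s : Finset Sub, s.card ≤ (s.biUnion t).card := by
    intro s
    have hmul : s.card * (q + 1) ≤ (s.biUnion t).card * (q + 1) := by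
      apply Finset.card_mul_le_card_mul (fun A B : Sub => Disjoint A.1 B.1)
      · intro a ha
        have hsub : t a ⊆ (s.biUnion t).bipartiteAbove (fun A B : Sub => Disjoint A.1 B.1) a := by
          intro b hb
          rw [Finset.mem_bipartiteAbove]
          refine ⟨Finset.mem_biUnion.mpr ⟨a, ha, hb⟩, ?_⟩
          simp only [t, Finset.mem_filter] at hb
          exact hb.2
        calc q + 1 = (t a).card := (key a).symm
          _ ≤ _ := Finset.card_le_card hsub
      · intro b _
        have hsub : s.bipartiteBelow (fun A B : Sub => Disjoint A.1 B.1) b ⊆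
            Finset.univ.filter (fun A : Sub => Disjoint b.1 A.1) := by
          intro a ha
          rw [Finset.mem_bipartiteBelow] at ha
          simp only [Finset.mem_filter, Finset.mem_univ, true_and]
          exact ha.2.symm
        calc _ ≤ _ := Finset.card_le_card hsub
          _ = q + 1 := key b
    exact Nat.le_of_mul_le_mul_right hmul (Nat.succ_pos q)
  obtain ⟨f, hf, hft⟩ := (Finset.all_card_le_biUnion_card_iff_exists_injective t).mp hall
  refine ⟨f, (Finite.injective_iff_bijective).mp hf, fun A => ?_⟩
  have := hft A
  simp only [t, Finset.mem_filter] at this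
  exact this.2.symm
end

section
/- Let q be a positive integer and Ω = {1,...,2q+1}. For each q-element subset A of Ω, let 𝔠(A) denote the family of q-element subsets of Ω \ A. Then the indexed family (𝔠(A))_{A} (indexed over all q-element subsets A of Ω) satisfies Hall's condition: for every collection I of q-element subsets of Ω, the union ⋃_{A ∈ I} 𝔠(A) has at least |I| elements. -/
open Finset in
theorem stmt_8 (q : ℕ) (hq : 0 < q)
    (I : Finset (Finset (Fin (2 * q + 1)))) (hI : ∀ A ∈ I, A.card = q) :
    I.card ≤ (I.biUnion fun A => (univ \ A).powersetCard q).card := by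
  classical
  set t := I.biUnion fun A => (univ \ A).powersetCard q with ht
  set r : Finset (Fin (2 * q + 1)) → Finset (Fin (2 * q + 1)) → Prop :=
    fun A B => B ∈ (univ \ A).powersetCard q with hr
  have key : I.card * (q + 1) ≤ t.card * (q + 1) := by
    apply Finset.card_mul_le_card_mul r
    · intro A hA
      have hsub : (univ \ A).powersetCard q ⊆ t.bipartiteAbove r A := by
        intro B hB
        rw [Finset.mem_bipartiteAbove]
        exact ⟨Finset.mem_biUnion.2 ⟨A, hA, hB⟩, hB⟩
      have hcard : ((univ \ A).powersetCard q).card = q + 1 := by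
        rw [Finset.card_powersetCard, Finset.card_sdiff_of_subset (Finset.subset_univ A),
          Finset.card_univ, Fintype.card_fin, hI A hA]
        have : 2 * q + 1 - q = q + 1 := by omega
        rw [this, Nat.choose_succ_self_right]
      calc q + 1 = ((univ \ A).powersetCard q).card := hcard.symm
        _ ≤ _ := Finset.card_le_card hsub
    · intro B hB
      have hBcard : B.card = q := by
        obtain ⟨A, hA, hB'⟩ := Finset.mem_biUnion.1 hB
        exact (Finset.mem_powersetCard.1 hB').2
      have hsub : I.bipartiteBelow r B ⊆ (univ \ B).powersetCard q := by
        intro A hA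
        rw [Finset.mem_bipartiteBelow] at hA
        obtain ⟨hAI, hrAB⟩ := hA
        obtain ⟨hBsub, _⟩ := Finset.mem_powersetCard.1 hrAB
        rw [Finset.mem_powersetCard]
        refine ⟨fun x hx => Finset.mem_sdiff.2 ⟨Finset.mem_univ _, fun hxB => ?_⟩, hI A hAI⟩
        exact (Finset.mem_sdiff.1 (hBsub hxB)).2 hx
      have hcard : ((univ \ B).powersetCard q).card = q + 1 := by
        rw [Finset.card_powersetCard, Finset.card_sdiff_of_subset (Finset.subset_univ B),
          Finset.card_univ, Fintype.card_fin, hBcard]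
        have : 2 * q + 1 - q = q + 1 := by omega
        rw [this, Nat.choose_succ_self_right]
      calc (I.bipartiteBelow r B).card ≤ _ := Finset.card_le_card hsub
        _ = q + 1 := hcard
  exact Nat.le_of_mul_le_mul_right key (by omega)
end

section
/- Let d ≥ 2, n = 2d+2, r = 2d-1. Let f : Fin n → ℝ be an n-weight function with exactly r nonnegative values, arranged so that f(1) ≥ ... ≥ f(r) ≥ 0 > f(r+1) ≥ f(r+2) ≥ f(r+3). Suppose f(k) + f(n) < 0 for every k = 1,...,r. Then φ(f,d) ≥ C(r,d) + C(r,d-1). -/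
set_option maxHeartbeats 2000000 in
open Finset in
theorem stmt_11 (d : ℕ) (hd : 2 ≤ d)
    (f : Fin (2 * d + 2) → ℝ) (hsum : 0 ≤ ∑ x, f x)
    (hmono : ∀ i j : Fin (2 * d + 2), i ≤ j → f j ≤ f i)
    (hpos : ∀ i : Fin (2 * d + 2), (i : ℕ) < 2 * d - 1 → 0 ≤ f i)
    (hneg : ∀ i : Fin (2 * d + 2), 2 * d - 1 ≤ (i : ℕ) → f i < 0)
    (hlast : ∀ k : Fin (2 * d + 2), (k : ℕ) < 2 * d - 1 →
      f k + f ⟨2 * d + 1, by omega⟩ < 0) :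
    (2 * d - 1).choose d + (2 * d - 1).choose (d - 1) ≤
      ((univ.powersetCard d).filter fun Y => 0 ≤ ∑ y ∈ Y, f y).card := by
  classical
  set p : Fin (2 * d + 2) := ⟨2 * d - 1, by omega⟩ with hp
  set q : Fin (2 * d + 2) := ⟨2 * d, by omega⟩ with hq
  set l : Fin (2 * d + 2) := ⟨2 * d + 1, by omega⟩ with hl
  set R : Finset (Fin (2 * d + 2)) := univ.filter (fun i => (i : ℕ) < 2 * d - 1) with hR
  have hmemR : ∀ i : Fin (2 * d + 2), i ∈ R ↔ (i : ℕ) < 2 * d - 1 := by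
    intro i; simp [hR]
  have hpR : p ∉ R := by rw [hmemR]; simp [hp]
  have hqR : q ∉ R := by rw [hmemR]; simp [hq]
  -- cardinality of R
  have hRcard : R.card = 2 * d - 1 := by
    have : R = Finset.map (Fin.castLEEmb (show 2 * d - 1 ≤ 2 * d + 2 by omega)) univ := by
      ext i
      simp only [hmemR, Finset.mem_map, Finset.mem_univ, true_and, Fin.castLEEmb_apply]
      constructor
      · intro h; exact ⟨⟨(i : ℕ), h⟩, by ext; simp⟩
      · rintro ⟨j, rfl⟩; simpa using j.isLt
    rw [this, Finset.card_map, Finset.card_univ, Fintype.card_fin]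
  -- sum decomposition
  have hdecomp : ∑ x, f x = (∑ x ∈ R, f x) + (f p + f q + f l) := by
    have hsplit := Finset.sum_filter_add_sum_filter_not univ
      (fun i : Fin (2 * d + 2) => (i : ℕ) < 2 * d - 1) f
    have hset : univ.filter (fun i : Fin (2 * d + 2) => ¬ (i : ℕ) < 2 * d - 1)
        = {p, q, l} := by
      ext i
      simp only [Finset.mem_filter, Finset.mem_univ, true_and, not_lt,
        Finset.mem_insert, Finset.mem_singleton]
      have := i.isLt
      constructor
      · intro h
        have : (i : ℕ) = 2 * d - 1 ∨ (i : ℕ) = 2 * d ∨ (i : ℕ) = 2 * d + 1 := by omega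
        rcases this with h1 | h1 | h1
        · left; apply Fin.ext; simpa [hp]
        · right; left; apply Fin.ext; simpa [hq]
        · right; right; apply Fin.ext; simpa [hl]
      · rintro (rfl | rfl | rfl) <;> simp [hp, hq, hl] <;> omega
    have hpq : p ≠ q := by simp [hp, hq, Fin.ext_iff]; omega
    have hpl : p ≠ l := by simp [hp, hl, Fin.ext_iff]
    have hql : q ≠ l := by simp [hq, hl, Fin.ext_iff]
    rw [← hsplit, hset]
    rw [Finset.sum_insert (by simp [hpq, hpl]), Finset.sum_insert (by simp [hql]),
      Finset.sum_singleton]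
    ring
  -- the families
  set P : Finset (Finset (Fin (2 * d + 2))) := R.powersetCard (d - 1) with hP
  set X : Finset (Finset (Fin (2 * d + 2))) :=
    P.filter (fun A => 0 ≤ (∑ a ∈ A, f a) + f p) with hX
  set Ys : Finset (Finset (Fin (2 * d + 2))) :=
    P.filter (fun A => 0 ≤ (∑ a ∈ A, f a) + f q) with hYs
  set Bad : Finset (Finset (Fin (2 * d + 2))) :=
    P.filter (fun A => ¬ 0 ≤ (∑ a ∈ A, f a) + f p) with hBad
  -- key lemma: if A is bad, every (d-1)-subset of R \ A is in Ys
  have hbadY : ∀ A ∈ Bad, ∀ C ∈ (R \ A).powersetCard (d - 1), C ∈ Ys := by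
    intro A hA C hC
    rw [hBad, Finset.mem_filter, hP, Finset.mem_powersetCard] at hA
    obtain ⟨⟨hAR, hAcard⟩, hAbad⟩ := hA
    rw [Finset.mem_powersetCard] at hC
    obtain ⟨hCB, hCcard⟩ := hC
    have hBcard : (R \ A).card = d := by
      rw [Finset.card_sdiff_of_subset hAR, hRcard, hAcard]; omega
    -- C = (R \ A).erase b for some b
    have hone : ((R \ A) \ C).card = 1 := by
      rw [Finset.card_sdiff_of_subset hCB, hBcard, hCcard]; omega
    obtain ⟨b, hb⟩ := Finset.card_eq_one.mp hone
    have hbB : b ∈ R \ A := by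
      have : b ∈ (R \ A) \ C := by rw [hb]; exact Finset.mem_singleton_self b
      exact (Finset.mem_sdiff.mp this).1
    have hbR : b ∈ R := (Finset.mem_sdiff.mp hbB).1
    have hsumB : f b + ∑ a ∈ C, f a = ∑ a ∈ R \ A, f a := by
      have := Finset.sum_sdiff_eq_sub (f := f) hCB
      rw [hb, Finset.sum_singleton] at this
      linarith
    have hsumR : (∑ a ∈ R \ A, f a) + ∑ a ∈ A, f a = ∑ a ∈ R, f a :=
      Finset.sum_sdiff hAR
    have hflast : f b + f l < 0 := hlast b ((hmemR b).mp hbR)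
    rw [hYs, Finset.mem_filter]
    constructor
    · rw [hP, Finset.mem_powersetCard]
      exact ⟨hCB.trans (Finset.sdiff_subset), hCcard⟩
    · push_neg at hAbad
      rw [hdecomp] at hsum
      linarith
  -- double counting : Bad.card ≤ Ys.card
  have hcount : Bad.card ≤ Ys.card := by
    have hmul := Finset.card_mul_le_card_mul (fun A C => C ⊆ R \ A) (s := Bad) (t := Ys)
      (m := d) (n := d) ?_ ?_
    · exact Nat.le_of_mul_le_mul_right hmul (by omega)
    · intro A hA
      have hAP : A ∈ P := (Finset.mem_filter.mp hA).1
      rw [hP, Finset.mem_powersetCard] at hAP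
      have hBcard : (R \ A).card = d := by
        rw [Finset.card_sdiff_of_subset hAP.1, hRcard, hAP.2]; omega
      have hsub : (R \ A).powersetCard (d - 1) ⊆ Ys.bipartiteAbove (fun A C => C ⊆ R \ A) A := by
        intro C hC
        rw [Finset.bipartiteAbove, Finset.mem_filter]
        exact ⟨hbadY A hA C hC, (Finset.mem_powersetCard.mp hC).1⟩
      calc d = (d).choose (d - 1) := by
              rw [← Nat.choose_symm (by omega)]
              have : d - (d - 1) = 1 := by omega
              rw [this, Nat.choose_one_right]
          _ = ((R \ A).powersetCard (d - 1)).card := by rw [Finset.card_powersetCard, hBcard]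
          _ ≤ _ := Finset.card_le_card hsub
    · intro C hC
      have hCP : C ∈ P := (Finset.mem_filter.mp hC).1
      rw [hP, Finset.mem_powersetCard] at hCP
      have hRCcard : (R \ C).card = d := by
        rw [Finset.card_sdiff_of_subset hCP.1, hRcard, hCP.2]; omega
      have hsub : Bad.bipartiteBelow (fun A C => C ⊆ R \ A) C ⊆ (R \ C).powersetCard (d - 1) := by
        intro A hA
        rw [Finset.bipartiteBelow, Finset.mem_filter] at hA
        obtain ⟨hA, hCA⟩ := hA
        have hAP : A ∈ P := (Finset.mem_filter.mp hA).1
        rw [hP, Finset.mem_powersetCard] at hAP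
        rw [Finset.mem_powersetCard]
        refine ⟨fun a ha => Finset.mem_sdiff.mpr ⟨hAP.1 ha, fun haC => ?_⟩, hAP.2⟩
        · exact (Finset.mem_sdiff.mp (hCA haC)).2 ha
      calc (Bad.bipartiteBelow (fun A C => C ⊆ R \ A) C).card
          ≤ ((R \ C).powersetCard (d - 1)).card := Finset.card_le_card hsub
        _ = (d).choose (d - 1) := by rw [Finset.card_powersetCard, hRCcard]
        _ = d := by
              rw [← Nat.choose_symm (by omega)]
              have : d - (d - 1) = 1 := by omega
              rw [this, Nat.choose_one_right]
  -- assemble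
  set G : Finset (Finset (Fin (2 * d + 2))) :=
    (univ.powersetCard d).filter (fun Y => 0 ≤ ∑ y ∈ Y, f y) with hG
  set F0 : Finset (Finset (Fin (2 * d + 2))) := R.powersetCard d with hF0
  set F1 : Finset (Finset (Fin (2 * d + 2))) := X.image (insert p) with hF1
  set F2 : Finset (Finset (Fin (2 * d + 2))) := Ys.image (insert q) with hF2
  have hnotinP : ∀ A ∈ P, p ∉ A ∧ q ∉ A := by
    intro A hA
    rw [hP, Finset.mem_powersetCard] at hA
    exact ⟨fun h => hpR (hA.1 h), fun h => hqR (hA.1 h)⟩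
  have hF0G : F0 ⊆ G := by
    intro S hS
    rw [hF0, Finset.mem_powersetCard] at hS
    rw [hG, Finset.mem_filter]
    refine ⟨Finset.mem_powersetCard.mpr ⟨Finset.subset_univ S, hS.2⟩, ?_⟩
    exact Finset.sum_nonneg fun y hy => hpos y ((hmemR y).mp (hS.1 hy))
  have hF1G : F1 ⊆ G := by
    intro S hS
    rw [hF1, Finset.mem_image] at hS
    obtain ⟨A, hA, rfl⟩ := hS
    rw [hX, Finset.mem_filter] at hA
    obtain ⟨hAP, hAsum⟩ := hA
    obtain ⟨hpA, -⟩ := hnotinP A hAP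
    rw [hP, Finset.mem_powersetCard] at hAP
    rw [hG, Finset.mem_filter]
    constructor
    · rw [Finset.mem_powersetCard]
      refine ⟨Finset.subset_univ _, ?_⟩
      rw [Finset.card_insert_of_notMem hpA, hAP.2]; omega
    · rw [Finset.sum_insert hpA]; linarith
  have hF2G : F2 ⊆ G := by
    intro S hS
    rw [hF2, Finset.mem_image] at hS
    obtain ⟨A, hA, rfl⟩ := hS
    rw [hYs, Finset.mem_filter] at hA
    obtain ⟨hAP, hAsum⟩ := hA
    obtain ⟨-, hqA⟩ := hnotinP A hAP
    rw [hP, Finset.mem_powersetCard] at hAP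
    rw [hG, Finset.mem_filter]
    constructor
    · rw [Finset.mem_powersetCard]
      refine ⟨Finset.subset_univ _, ?_⟩
      rw [Finset.card_insert_of_notMem hqA, hAP.2]; omega
    · rw [Finset.sum_insert hqA]; linarith
  have hpq : p ≠ q := by simp [hp, hq, Fin.ext_iff]; omega
  -- disjointness
  have hpF1 : ∀ S ∈ F1, p ∈ S ∧ q ∉ S := by
    intro S hS
    rw [hF1, Finset.mem_image] at hS
    obtain ⟨A, hA, rfl⟩ := hS
    obtain ⟨-, hqA⟩ := hnotinP A (Finset.mem_filter.mp hA).1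
    exact ⟨Finset.mem_insert_self _ _, by
      simp only [Finset.mem_insert]
      push_neg
      exact ⟨hpq.symm, hqA⟩⟩
  have hqF2 : ∀ S ∈ F2, q ∈ S := by
    intro S hS
    rw [hF2, Finset.mem_image] at hS
    obtain ⟨A, hA, rfl⟩ := hS
    exact Finset.mem_insert_self _ _
  have hnoF0 : ∀ S ∈ F0, p ∉ S ∧ q ∉ S := by
    intro S hS
    rw [hF0, Finset.mem_powersetCard] at hS
    exact ⟨fun h => hpR (hS.1 h), fun h => hqR (hS.1 h)⟩
  have hd01 : Disjoint F0 F1 := by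
    rw [Finset.disjoint_left]
    intro S hS0 hS1
    exact (hnoF0 S hS0).1 (hpF1 S hS1).1
  have hd02 : Disjoint F0 F2 := by
    rw [Finset.disjoint_left]
    intro S hS0 hS2
    exact (hnoF0 S hS0).2 (hqF2 S hS2)
  have hd12 : Disjoint F1 F2 := by
    rw [Finset.disjoint_left]
    intro S hS1 hS2
    exact (hpF1 S hS1).2 (hqF2 S hS2)
  -- cards
  have hF0card : F0.card = (2 * d - 1).choose d := by
    rw [hF0, Finset.card_powersetCard, hRcard]
  have hinj : ∀ (z : Fin (2 * d + 2)), ∀ A ∈ P, ∀ B ∈ P,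
      insert z A = insert z B → z ∉ A → z ∉ B → A = B := by
    intro z A hA B hB h hzA hzB
    have := congrArg (fun s => Finset.erase s z) h
    simpa [Finset.erase_insert hzA, Finset.erase_insert hzB] using this
  have hF1card : F1.card = X.card := by
    rw [hF1]
    apply Finset.card_image_of_injOn
    intro A hA B hB h
    have hAP := (Finset.mem_filter.mp hA).1
    have hBP := (Finset.mem_filter.mp hB).1
    exact hinj p A hAP B hBP h (hnotinP A hAP).1 (hnotinP B hBP).1
  have hF2card : F2.card = Ys.card := by
    rw [hF2]
    apply Finset.card_image_of_injOn
    intro A hA B hB h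
    have hAP := (Finset.mem_filter.mp hA).1
    have hBP := (Finset.mem_filter.mp hB).1
    exact hinj q A hAP B hBP h (hnotinP A hAP).2 (hnotinP B hBP).2
  have hPcard : P.card = (2 * d - 1).choose (d - 1) := by
    rw [hP, Finset.card_powersetCard, hRcard]
  have hXBad : X.card + Bad.card = P.card := by
    rw [hX, hBad]
    exact Finset.card_filter_add_card_filter_not _
  have hunion : (F0 ∪ F1 ∪ F2).card = F0.card + F1.card + F2.card := by
    rw [Finset.card_union_of_disjoint, Finset.card_union_of_disjoint hd01]
    rw [Finset.disjoint_union_left]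
    exact ⟨hd02, hd12⟩
  have hsubG : F0 ∪ F1 ∪ F2 ⊆ G := by
    intro S hS
    rcases Finset.mem_union.mp hS with hS | hS
    · rcases Finset.mem_union.mp hS with hS | hS
      · exact hF0G hS
      · exact hF1G hS
    · exact hF2G hS
  calc (2 * d - 1).choose d + (2 * d - 1).choose (d - 1)
      = F0.card + (X.card + Bad.card) := by rw [hF0card, hXBad, hPcard]
    _ ≤ F0.card + (F1.card + F2.card) := by
        rw [hF1card, hF2card]; omega
    _ = (F0 ∪ F1 ∪ F2).card := by rw [hunion]; ring
    _ ≤ G.card := Finset.card_le_card hsubG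
end

section
/- Let d ≥ 2, n = 2d+2, r = 2d-1. Define γ(n,d,r) = min{φ(f,d) : f is an n-weight function with f⁺ = r}. Then γ(n,d,r) = C(2d-1, d) + C(2d-1, d-1). -/
/-!
Let `P` be the `2d - 1` points of nonnegative weight and `a, b, c` the three negative ones,
with `f c` minimal. Besides the `C(2d-1, d)` subsets of `P`, a nonnegative `d`-set can be
`{x} ∪ C` with `x` negative and `C` a `(d-1)`-subset of `P` such that `f x + ∑ C ≥ 0`; it
suffices to find `C(2d-1, d-1)` such pairs. If some `p ∈ P` has `f p ≥ -f c`, every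
`(d-1)`-subset of `P` through `p` works with each of `a, b, c`, and
`3 C(2d-2, d-2) ≥ C(2d-1, d-1)`. Otherwise, for every `(d-1)`-set `B` failing with `b`, all
`(d-1)`-subsets of the `d`-set `P \ B` work with `a`; as the disjointness graph on the
`(d-1)`-subsets of `P` is regular, double counting shows that at least as many sets work with
`a` as fail with `b`.

Equality holds for the weights `1` (`2d - 1` times), `-1/2` and `3/4 - d` (twice), whose
nonnegative `d`-sets are exactly the `d`-subsets of the first `2d` points.
-/

open Finset

theorem choose_two_mul_add_one_le_three_mul {k : ℕ} (hk : 1 ≤ k) :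
    (2 * k + 1).choose k ≤ 3 * (2 * k).choose (k - 1) := by
  obtain ⟨j, rfl⟩ : ∃ j, k = j + 1 := ⟨k - 1, by omega⟩
  have hpascal := Nat.choose_succ_succ' (2 * j + 2) j
  have hratio := Nat.choose_succ_right_eq (2 * j + 2) j
  rw [show 2 * j + 2 - j = j + 2 by omega] at hratio
  rw [show 2 * (j + 1) + 1 = 2 * j + 2 + 1 by ring, show 2 * (j + 1) = 2 * j + 2 by ring,
    Nat.add_sub_cancel, hpascal]
  nlinarith

section Weights

variable {α : Type*}

noncomputable def nonnegSubsets [Fintype α] (f : α → ℝ) (d : ℕ) :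
    Finset (Finset α) :=
  {Y ∈ univ.powersetCard d | 0 ≤ ∑ y ∈ Y, f y}

noncomputable def nonnegExtensions (f : α → ℝ) (P : Finset α) (k : ℕ) (x : α) :
    Finset (Finset α) :=
  {C ∈ P.powersetCard k | 0 ≤ ∑ y ∈ C, f y + f x}

variable [DecidableEq α]

theorem card_le_card_of_forall_powersetCard_sdiff_subset {P : Finset α} {k : ℕ}
    (hk : 2 * k ≤ #P) {𝒜 ℬ : Finset (Finset α)} (h𝒜 : 𝒜 ⊆ P.powersetCard k)
    (hℬ : ℬ ⊆ P.powersetCard k) (h : ∀ A ∈ 𝒜, (P \ A).powersetCard k ⊆ ℬ) : #𝒜 ≤ #ℬ := by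
  have hdeg : ∀ A ∈ P.powersetCard k, #((P \ A).powersetCard k) = (#P - k).choose k := by
    intro A hA
    rw [mem_powersetCard] at hA
    rw [card_powersetCard, card_sdiff_of_subset hA.1, hA.2]
  refine Nat.le_of_mul_le_mul_right (card_mul_le_card_mul (fun A C => Disjoint A C)
    (fun A hA => ?_) (fun C hC => ?_)) (Nat.choose_pos (n := #P - k) (k := k) (by omega))
  · rw [← hdeg A (h𝒜 hA)]
    refine card_le_card fun C hC => mem_filter.2 ⟨h A hA hC, ?_⟩
    exact disjoint_of_subset_right (mem_powersetCard.1 hC).1 disjoint_sdiff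
  · rw [← hdeg C (hℬ hC)]
    refine card_le_card fun A hA => ?_
    obtain ⟨hA, hAC⟩ := mem_filter.1 hA
    obtain ⟨hAP, hAk⟩ := mem_powersetCard.1 (h𝒜 hA)
    exact mem_powersetCard.2 ⟨subset_sdiff.2 ⟨hAP, hAC⟩, hAk⟩

variable {f : α → ℝ} {P : Finset α} {k : ℕ}

theorem choose_le_card_nonnegExtensions_of_mem (hk : 1 ≤ k) (hf : ∀ y ∈ P, 0 ≤ f y)
    {p x : α} (hp : p ∈ P) (hpx : 0 ≤ f p + f x) :
    (#P - 1).choose (k - 1) ≤ #(nonnegExtensions f P k x) := by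
  rw [← card_erase_of_mem hp, ← card_powersetCard]
  refine card_le_card_of_injOn (insert p) (fun C hC => ?_) (fun C hC D hD hCD => ?_)
  · obtain ⟨hCsub, hCk⟩ := mem_powersetCard.1 hC
    have hpC : p ∉ C := fun h => notMem_erase p P (hCsub h)
    have hCP : C ⊆ P := hCsub.trans (erase_subset p P)
    refine mem_filter.2 ⟨mem_powersetCard.2 ⟨insert_subset hp hCP, ?_⟩, ?_⟩
    · rw [card_insert_of_notMem hpC, hCk]; omega
    · rw [sum_insert hpC]
      linarith [sum_nonneg fun y hy => hf y (hCP hy)]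
  · have hpC : p ∉ C := fun h => notMem_erase p P ((mem_powersetCard.1 hC).1 h)
    have hpD : p ∉ D := fun h => notMem_erase p P ((mem_powersetCard.1 hD).1 h)
    rw [← erase_insert hpC, ← erase_insert hpD]
    exact congrArg (·.erase p) hCD

theorem choose_le_card_add_card_nonnegExtensions (hP : #P = 2 * k + 1) {a b c : α}
    (hc : ∀ p ∈ P, f p < -f c) (hsum : 0 ≤ ∑ y ∈ P, f y + f a + f b + f c) :
    (2 * k + 1).choose k ≤ #(nonnegExtensions f P k a) + #(nonnegExtensions f P k b) := by
  set bad : Finset (Finset α) := {B ∈ P.powersetCard k | ¬ 0 ≤ ∑ y ∈ B, f y + f b}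
  have hsplit : #(nonnegExtensions f P k b) + #bad = (2 * k + 1).choose k := by
    rw [nonnegExtensions, card_filter_add_card_filter_not, card_powersetCard, hP]
  suffices #bad ≤ #(nonnegExtensions f P k a) by omega
  refine card_le_card_of_forall_powersetCard_sdiff_subset (by omega) (filter_subset _ _)
    (filter_subset _ _) fun B hB C hC => ?_
  obtain ⟨hB, hBneg⟩ := mem_filter.1 hB
  obtain ⟨hBP, hBk⟩ := mem_powersetCard.1 hB
  obtain ⟨hCsub, hCk⟩ := mem_powersetCard.1 hC
  -- `P \ B = insert x C` with `f x < -f c`, so `∑ C = ∑ P - ∑ B - f x > -f a`.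
  obtain ⟨x, hx⟩ := card_eq_one.1 (show #((P \ B) \ C) = 1 by
    rw [card_sdiff_of_subset hCsub, card_sdiff_of_subset hBP]; omega)
  have hxP : x ∈ P := (mem_sdiff.1 (mem_sdiff.1 (hx ▸ mem_singleton_self x)).1).1
  have hPB := sum_sdiff (f := f) hBP
  have hBC := sum_sdiff (f := f) hCsub
  rw [hx, sum_singleton] at hBC
  refine mem_filter.2 ⟨mem_powersetCard.2 ⟨hCsub.trans sdiff_subset, hCk⟩, ?_⟩
  linarith [hc x hxP]

theorem choose_le_sum_card_nonnegExtensions (hk : 1 ≤ k) (hP : #P = 2 * k + 1)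
    (hf : ∀ y ∈ P, 0 ≤ f y) {a b c : α} (hca : f c ≤ f a) (hcb : f c ≤ f b)
    (hsum : 0 ≤ ∑ y ∈ P, f y + f a + f b + f c) :
    (2 * k + 1).choose k ≤ #(nonnegExtensions f P k a) + #(nonnegExtensions f P k b) +
      #(nonnegExtensions f P k c) := by
  by_cases hbig : ∃ p ∈ P, -f c ≤ f p
  · obtain ⟨p, hp, hpc⟩ := hbig
    have ha := choose_le_card_nonnegExtensions_of_mem hk hf hp (x := a) (by linarith)
    have hb := choose_le_card_nonnegExtensions_of_mem hk hf hp (x := b) (by linarith)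
    have hc := choose_le_card_nonnegExtensions_of_mem hk hf hp (x := c) (by linarith)
    rw [hP, Nat.add_sub_cancel] at ha hb hc
    have := choose_two_mul_add_one_le_three_mul hk
    omega
  · push Not at hbig
    have := choose_le_card_add_card_nonnegExtensions hP hbig hsum
    omega

theorem choose_add_sum_card_nonnegExtensions_le [Fintype α] (hf : ∀ y ∈ P, 0 ≤ f y)
    (k : ℕ) :
    (#P).choose (k + 1) + ∑ x ∈ Pᶜ, #(nonnegExtensions f P k x) ≤
      #(nonnegSubsets f (k + 1)) := by
  set lift : α → Finset (Finset α) := fun x => (nonnegExtensions f P k x).image (insert x)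
  have hsub : ∀ x, ∀ C ∈ nonnegExtensions f P k x, C ⊆ P :=
    fun _ _ hC => (mem_powersetCard.1 (mem_filter.1 hC).1).1
  have hP : P.powersetCard (k + 1) ⊆ nonnegSubsets f (k + 1) := fun Y hY => by
    obtain ⟨hYP, hYk⟩ := mem_powersetCard.1 hY
    exact mem_filter.2 ⟨mem_powersetCard.2 ⟨subset_univ Y, hYk⟩,
      sum_nonneg fun y hy => hf y (hYP hy)⟩
  have hlift : ∀ x ∈ Pᶜ, lift x ⊆ nonnegSubsets f (k + 1) := by
    intro x hx Y hY
    obtain ⟨C, hC, rfl⟩ := mem_image.1 hY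
    obtain ⟨hC, hCsum⟩ := mem_filter.1 hC
    obtain ⟨hCP, hCk⟩ := mem_powersetCard.1 hC
    have hxC : x ∉ C := fun h => mem_compl.1 hx (hCP h)
    refine mem_filter.2 ⟨mem_powersetCard.2 ⟨subset_univ _, ?_⟩, ?_⟩
    · rw [card_insert_of_notMem hxC, hCk]
    · rwa [sum_insert hxC, add_comm]
  have hcard : ∀ x ∈ Pᶜ, #(lift x) = #(nonnegExtensions f P k x) := by
    intro x hx
    refine card_image_of_injOn fun C hC D hD hCD => ?_
    have hxC : x ∉ C := fun h => mem_compl.1 hx (hsub x C hC h)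
    have hxD : x ∉ D := fun h => mem_compl.1 hx (hsub x D hD h)
    rw [← erase_insert hxC, ← erase_insert hxD]
    exact congrArg (·.erase x) hCD
  have hdisj : ((Pᶜ : Finset α) : Set α).PairwiseDisjoint lift := by
    intro x hx y _ hxy
    refine disjoint_left.2 fun Y hYx hYy => ?_
    obtain ⟨C, -, rfl⟩ := mem_image.1 hYx
    obtain ⟨D, hD, hDC⟩ := mem_image.1 hYy
    rcases mem_insert.1 (hDC ▸ mem_insert_self x C) with h | h
    · exact hxy h
    · exact mem_compl.1 hx (hsub y D hD h)
  have hdisjP : Disjoint (P.powersetCard (k + 1)) (Pᶜ.biUnion lift) := by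
    refine disjoint_left.2 fun Y hY hY' => ?_
    obtain ⟨x, hx, hYx⟩ := mem_biUnion.1 hY'
    obtain ⟨C, -, rfl⟩ := mem_image.1 hYx
    exact mem_compl.1 hx ((mem_powersetCard.1 hY).1 (mem_insert_self x C))
  calc (#P).choose (k + 1) + ∑ x ∈ Pᶜ, #(nonnegExtensions f P k x)
      = #(P.powersetCard (k + 1) ∪ Pᶜ.biUnion lift) := by
        rw [card_union_of_disjoint hdisjP, card_biUnion hdisj, card_powersetCard,
          sum_congr rfl hcard]
    _ ≤ #(nonnegSubsets f (k + 1)) := card_le_card (union_subset hP (biUnion_subset.2 hlift))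

theorem choose_add_choose_le_card_nonnegSubsets [Fintype α] {d : ℕ} (hd : 2 ≤ d)
    (hα : Fintype.card α = 2 * d + 2) (hsum : 0 ≤ ∑ x, f x)
    (hpos : #{x | 0 ≤ f x} = 2 * d - 1) :
    (2 * d - 1).choose d + (2 * d - 1).choose (d - 1) ≤ #(nonnegSubsets f d) := by
  obtain ⟨k, rfl⟩ : ∃ k, d = k + 1 := ⟨d - 1, by omega⟩
  set P : Finset α := {x | 0 ≤ f x}
  have hf : ∀ y ∈ P, 0 ≤ f y := fun y hy => (mem_filter.1 hy).2
  have hP : #P = 2 * k + 1 := by omega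
  obtain ⟨c, hc, hcmin⟩ := Pᶜ.exists_min_image f (card_pos.1 (by rw [card_compl]; omega))
  obtain ⟨a, b, hab, hab_eq⟩ := card_eq_two.1 (show #(Pᶜ.erase c) = 2 by
    rw [card_erase_of_mem hc, card_compl]; omega)
  have hca : c ∉ ({a, b} : Finset α) := hab_eq ▸ notMem_erase c Pᶜ
  have hPc : Pᶜ = {c, a, b} := by rw [← hab_eq, insert_erase hc]
  have hmem : a ∈ Pᶜ ∧ b ∈ Pᶜ := by simp [hPc]
  have hkey := choose_le_sum_card_nonnegExtensions (by omega) hP hf (hcmin a hmem.1)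
    (hcmin b hmem.2) (by
      rw [← sum_add_sum_compl P, hPc, sum_insert hca, sum_pair hab] at hsum
      linarith)
  have hsplit := choose_add_sum_card_nonnegExtensions_le hf k
  rw [hPc, sum_insert hca, sum_pair hab, hP] at hsplit
  rw [show 2 * (k + 1) - 1 = 2 * k + 1 by omega, Nat.add_sub_cancel]
  omega

end Weights

section Extremal

noncomputable def extremalWeight (d : ℕ) (i : Fin (2 * d + 2)) : ℝ :=
  if (i : ℕ) < 2 * d - 1 then 1 else if (i : ℕ) = 2 * d - 1 then -1 / 2 else 3 / 4 - d

variable {d : ℕ}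

theorem extremalWeight_le_one (i : Fin (2 * d + 2)) : extremalWeight d i ≤ 1 := by
  unfold extremalWeight
  split_ifs <;> linarith [(d.cast_nonneg : (0 : ℝ) ≤ d)]

theorem sum_extremalWeight (hd : 1 ≤ d) : ∑ i, extremalWeight d i = 0 := by
  unfold extremalWeight
  rw [Fin.sum_univ_eq_sum_range (fun i => if i < 2 * d - 1 then (1 : ℝ) else
    if i = 2 * d - 1 then -1 / 2 else 3 / 4 - d), show 2 * d + 2 = 2 * d - 1 + 1 + 1 + 1 by omega]
  simp only [sum_range_succ]
  rw [sum_congr rfl fun i hi => if_pos (mem_range.1 hi)]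
  simp only [sum_const, card_range, nsmul_eq_mul, mul_one, lt_irrefl, if_false, if_true]
  rw [if_neg (by omega), if_neg (by omega), if_neg (by omega), if_neg (by omega)]
  push_cast [Nat.cast_sub (by omega : 1 ≤ 2 * d)]
  ring

theorem card_extremalWeight_nonneg (hd : 1 ≤ d) :
    #{i | 0 ≤ extremalWeight d i} = 2 * d - 1 := by
  have : univ.filter (fun i => 0 ≤ extremalWeight d i) =
      univ.filter (fun i : Fin (2 * d + 2) => (i : ℕ) < 2 * d - 1) := by
    refine filter_congr fun i _ => ?_
    unfold extremalWeight
    split_ifs with h1 h2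
    · simpa using h1
    · norm_num [h1]
    · simp only [h1, iff_false, not_le]
      linarith [(by exact_mod_cast hd : (1 : ℝ) ≤ d)]
  rw [this, Fin.card_filter_val_lt]
  omega

theorem nonnegSubsets_extremalWeight (hd : 2 ≤ d) :
    nonnegSubsets (extremalWeight d) d =
      (univ.filter fun i : Fin (2 * d + 2) => (i : ℕ) < 2 * d).powersetCard d := by
  have hdR : (2 : ℝ) ≤ d := by exact_mod_cast hd
  ext Y
  simp only [nonnegSubsets, mem_filter, mem_powersetCard, subset_univ, true_and]
  constructor
  · rintro ⟨hYd, hsum⟩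
    refine ⟨fun y hy => mem_filter.2 ⟨mem_univ y, ?_⟩, hYd⟩
    by_contra hy'
    have hwy : extremalWeight d y = 3 / 4 - d := by
      unfold extremalWeight
      rw [if_neg (by omega), if_neg (by omega)]
    have hrest : ∑ i ∈ Y.erase y, extremalWeight d i ≤ #(Y.erase y) • (1 : ℝ) :=
      sum_le_card_nsmul _ _ _ fun i _ => extremalWeight_le_one i
    rw [card_erase_of_mem hy, hYd, nsmul_eq_mul, mul_one,
      Nat.cast_sub (by omega : 1 ≤ d), Nat.cast_one] at hrest
    rw [← add_sum_erase Y _ hy, hwy] at hsum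
    linarith
  · rintro ⟨hsub, hYd⟩
    refine ⟨hYd, ?_⟩
    set z : Fin (2 * d + 2) := ⟨2 * d - 1, by omega⟩
    have hone : ∀ y ∈ Y, y ≠ z → extremalWeight d y = 1 := by
      intro y hy hyz
      have hy2 : (y : ℕ) < 2 * d := (mem_filter.1 (hsub hy)).2
      have : (y : ℕ) ≠ 2 * d - 1 := fun h => hyz (Fin.ext h)
      exact if_pos (by omega)
    by_cases hz : z ∈ Y
    · have hwz : extremalWeight d z = -1 / 2 := by
        unfold extremalWeight
        rw [if_neg (lt_irrefl _), if_pos rfl]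
      rw [← add_sum_erase Y _ hz, hwz,
        sum_congr rfl fun y hy => hone y (mem_of_mem_erase hy) (ne_of_mem_erase hy),
        sum_const, card_erase_of_mem hz, hYd, nsmul_eq_mul, mul_one,
        Nat.cast_sub (by omega : 1 ≤ d), Nat.cast_one]
      linarith
    · rw [sum_congr rfl fun y hy => hone y hy (ne_of_mem_of_not_mem hy hz), sum_const,
        nsmul_eq_mul, mul_one]
      positivity

end Extremal

open Finset in
theorem stmt_12 (d : ℕ) (hd : 2 ≤ d) :
    IsLeast {m : ℕ | ∃ f : Fin (2 * d + 2) → ℝ, 0 ≤ ∑ x, f x ∧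
        (univ.filter fun x => 0 ≤ f x).card = 2 * d - 1 ∧
        ((univ.powersetCard d).filter fun Y => 0 ≤ ∑ y ∈ Y, f y).card = m}
      ((2 * d - 1).choose d + (2 * d - 1).choose (d - 1)) := by
  refine ⟨⟨extremalWeight d, (sum_extremalWeight (by omega)).ge,
    card_extremalWeight_nonneg (by omega), ?_⟩, ?_⟩
  · change #(nonnegSubsets (extremalWeight d) d) = _
    rw [nonnegSubsets_extremalWeight hd, card_powersetCard, Fin.card_filter_val_lt,
      min_eq_right (by omega), Nat.choose_eq_choose_pred_add (by omega) (by omega), add_comm]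
  · rintro m ⟨f, hsum, hpos, rfl⟩
    exact choose_add_choose_le_card_nonnegSubsets hd (Fintype.card_fin _) hsum hpos
end

section
/- Let d ≥ 2 and n be positive integers with d dividing n, and set r = (d-1)n/d (so r = (d-1)(n-r)). Then for every n-weight function f with f⁺ = r, one has φ(f,d) ≥ C(r,d) + C(r,d-1). -/
open Finset

/-!
Write `d = k + 1` and `f⁺ = r = k m`, so that exactly `m` values of `f` are negative, and call a
set good when its `f`-sum is nonnegative. All `C(r, d)` sets of `d` nonnegative points are good.
For the candidates made of `k` nonnegative points and one negative point we average: cut the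
nonnegative points into `m` blocks of size `k` and match the blocks with the negative points.
The `m` resulting candidates have total weight `∑ f ≥ 0`, so one of them is good. Permutations of
the two sides act transitively on the `m C(km, k)` candidates, so each one sits in a given block
equally often; counting good (blocking, block) pairs gives at least `C(km, k) = C(r, d - 1)` good
candidates.
-/

section Averaging

variable {ι X Y : Type*} [Fintype X] [DecidableEq Y]

theorem card_mul_card_fiber_eq_of_forall_exists_equiv (b : X → Y) {t : Finset Y}
    (hbt : ∀ x, b x ∈ t)
    (hsymm : ∀ y ∈ t, ∀ y' ∈ t, ∃ e : X ≃ X, ∀ x, b x = y ↔ b (e x) = y')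
    {y : Y} (hy : y ∈ t) : #t * #{x | b x = y} = Fintype.card X := by
  have hfiber : ∀ y' ∈ t, #{x | b x = y'} = #{x | b x = y} := fun y' hy' =>
    let ⟨e, he⟩ := hsymm y hy y' hy'
    (card_equiv e fun x => by simp [he]).symm
  rw [← card_univ, card_eq_sum_card_fiberwise (s := univ) (fun x _ => hbt x),
    sum_congr rfl hfiber, sum_const, smul_eq_mul]

theorem card_le_card_mul_card_filter_of_forall_exists [Fintype ι] [Nonempty X]
    (b : ι → X → Y) {t : Finset Y} (hbt : ∀ i x, b i x ∈ t)
    (huniform : ∀ i, ∀ y ∈ t, #t * #{x | b i x = y} = Fintype.card X)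
    (p : Y → Prop) [DecidablePred p] (hp : ∀ x, ∃ i, p (b i x)) :
    #t ≤ Fintype.card ι * #{y ∈ t | p y} := by
  have hcover : Fintype.card X ≤ ∑ i, #{x | p (b i x)} := by
    calc Fintype.card X = ∑ _x : X, 1 := by simp
      _ ≤ ∑ x : X, #{i | p (b i x)} :=
          sum_le_sum fun x _ => card_pos.mpr <| let ⟨i, hi⟩ := hp x; ⟨i, by simpa using hi⟩
      _ = ∑ i, #{x | p (b i x)} := by simp only [card_filter]; exact sum_comm
  have hfiber (i : ι) : #t * #{x | p (b i x)} = #{y ∈ t | p y} * Fintype.card X := by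
    calc #t * #{x | p (b i x)} = ∑ y ∈ t with p y, #t * #{x | b i x = y} := by
          rw [card_eq_sum_card_fiberwise (t := {y ∈ t | p y}) (f := b i)
            (fun x hx => by simp_all), mul_sum]
          refine sum_congr rfl fun y hy => ?_
          rw [filter_filter]
          congr 2
          ext x
          simp only [mem_filter, mem_univ, true_and]
          exact ⟨And.right, fun hx => ⟨hx ▸ (mem_filter.1 hy).2, hx⟩⟩
      _ = #{y ∈ t | p y} * Fintype.card X := by
          rw [sum_congr rfl fun y hy => huniform i y (mem_filter.1 hy).1, sum_const, smul_eq_mul]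
  refine Nat.le_of_mul_le_mul_right ?_ (Fintype.card_pos (α := X))
  calc #t * Fintype.card X ≤ ∑ i, #t * #{x | p (b i x)} := by
        rw [← mul_sum]; exact Nat.mul_le_mul_left _ hcover
    _ = Fintype.card ι * #{y ∈ t | p y} * Fintype.card X := by
        simp [hfiber, mul_assoc]

end Averaging

theorem Finset.exists_perm_map_eq {α : Type*} [DecidableEq α] {S T : Finset α}
    (h : #S = #T) : ∃ π : Equiv.Perm α, S.map π.toEmbedding = T := by
  obtain ⟨π, hπ⟩ := (Set.powersetCard.isPretransitive (n := #T)).exists_smul_eq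
    (Set.powersetCard.ofCard h) (Set.powersetCard.ofCard rfl)
  refine ⟨π, ?_⟩
  simpa [Set.powersetCard.val_ofCard, Finset.smul_finset_def, map_eq_image] using
    congrArg Subtype.val hπ

section Grid

variable {α : Type*} {m k : ℕ}

def gridRow (F : Fin m × Fin k ≃ α) (i : Fin m) : Finset α :=
  univ.map ((Function.Embedding.sectR i _).trans F.toEmbedding)

theorem card_gridRow (F : Fin m × Fin k ≃ α) (i : Fin m) : #(gridRow F i) = k := by
  simp [gridRow]

theorem sum_sum_gridRow [Fintype α] {M : Type*} [AddCommMonoid M] (F : Fin m × Fin k ≃ α)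
    (g : α → M) : ∑ i, ∑ x ∈ gridRow F i, g x = ∑ x, g x := by
  simp [gridRow, ← Fintype.sum_prod_type', F.sum_comp g]

theorem gridRow_trans (F : Fin m × Fin k ≃ α) (π : Equiv.Perm α) (i : Fin m) :
    gridRow (F.trans π) i = (gridRow F i).map π.toEmbedding := by
  rw [gridRow, gridRow, map_map]; rfl

end Grid

theorem choose_le_card_filter_sum_add_nonneg {α β : Type*} [Fintype α] [Fintype β]
    [DecidableEq α] [DecidableEq β] {k m : ℕ} (hm : 0 < m)
    (hα : Fintype.card α = k * m) (hβ : Fintype.card β = m) (g : α → ℝ) (h : β → ℝ)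
    (hsum : 0 ≤ ∑ x, g x + ∑ y, h y) :
    (k * m).choose k ≤ #{p ∈ univ.powersetCard k ×ˢ univ | 0 ≤ ∑ x ∈ p.1, g x + h p.2} := by
  have : Nonempty (Fin m) := Fin.pos_iff_nonempty.mp hm
  have : Nonempty ((Fin m × Fin k ≃ α) × (Fin m ≃ β)) :=
    ⟨Fintype.equivOfCardEq (by simp [hα, mul_comm]), Fintype.equivOfCardEq (by simp [hβ])⟩
  set t : Finset (Finset α × β) := univ.powersetCard k ×ˢ univ
  let block (i : Fin m) (c : (Fin m × Fin k ≃ α) × (Fin m ≃ β)) : Finset α × β :=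
    (gridRow c.1 i, c.2 i)
  have hblock (i c) : block i c ∈ t := by simp [t, block, card_gridRow]
  have hsymm (i) : ∀ y ∈ t, ∀ y' ∈ t, ∃ e : _ ≃ _, ∀ c, block i c = y ↔ block i (e c) = y' := by
    rintro ⟨S, b⟩ hSb ⟨S', b'⟩ hSb'
    simp only [t, mem_product, mem_powersetCard_univ] at hSb hSb'
    obtain ⟨π, hπ⟩ := exists_perm_map_eq (hSb.1.trans hSb'.1.symm)
    refine ⟨((Equiv.refl _).equivCongr π).prodCongr ((Equiv.refl _).equivCongr (.swap b b')), ?_⟩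
    intro c
    simp [block, Equiv.equivCongr_refl_left, gridRow_trans, ← hπ, Prod.ext_iff,
      Equiv.swap_apply_eq_iff]
  have hgood (c : (Fin m × Fin k ≃ α) × (Fin m ≃ β)) :
      ∃ i, 0 ≤ ∑ x ∈ gridRow c.1 i, g x + h (c.2 i) := by
    obtain ⟨i, -, hi⟩ := exists_le_of_sum_le (f := 0) (s := univ)
      (g := fun i => ∑ x ∈ gridRow c.1 i, g x + h (c.2 i)) univ_nonempty
      (by simpa [sum_add_distrib, sum_sum_gridRow, c.2.sum_comp h] using hsum)
    exact ⟨i, hi⟩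
  have key := card_le_card_mul_card_filter_of_forall_exists block hblock
    (fun i _ hy => card_mul_card_fiber_eq_of_forall_exists_equiv _ (hblock i) (hsymm i) hy)
    (fun p => 0 ≤ ∑ x ∈ p.1, g x + h p.2) hgood
  rw [card_product, card_powersetCard, card_univ, card_univ, hα, hβ, Fintype.card_fin,
    mul_comm] at key
  exact Nat.le_of_mul_le_mul_left key hm

section SignSplit

variable {ι : Type*} (f : ι → ℝ)

theorem notMem_map_subtype_of_neg (S : Finset {x // 0 ≤ f x}) {y : ι} (hy : ¬0 ≤ f y) :
    y ∉ S.map (.subtype _) := by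
  simp only [mem_map, Function.Embedding.subtype_apply, not_exists, not_and]
  rintro x - rfl
  exact hy x.2

variable [Fintype ι] [DecidableEq ι]

theorem card_filter_nonneg_add_neg_le (k : ℕ) :
    #((univ.powersetCard k ×ˢ univ).filter
        fun p : Finset {x // 0 ≤ f x} × {x // ¬0 ≤ f x} => 0 ≤ ∑ x ∈ p.1, f x + f p.2) ≤
      #{Y ∈ univ.powersetCard (k + 1) | 0 ≤ ∑ y ∈ Y, f y ∧ ¬∀ y ∈ Y, 0 ≤ f y} := by
  refine card_le_card_of_injOn (fun p => insert p.2.1 (p.1.map (.subtype _))) ?_ ?_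
  · rintro ⟨S, y, hy⟩ hSy
    simp only [coe_filter, mem_product, mem_powersetCard_univ, mem_univ, and_true,
      Set.mem_ofPred_eq] at hSy
    have hyS := notMem_map_subtype_of_neg f S hy
    simp only [coe_filter, mem_powersetCard_univ, Set.mem_ofPred_eq, card_insert_of_notMem hyS,
      card_map, sum_insert hyS, sum_map, Function.Embedding.subtype_apply]
    exact ⟨by rw [hSy.1], by linarith [hSy.2], fun hall => hy (hall y (mem_insert_self _ _))⟩
  · rintro ⟨S₁, y₁, hy₁⟩ - ⟨S₂, y₂, hy₂⟩ - h
    simp only at h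
    have hy : y₁ = y₂ := by
      have := h ▸ mem_insert_self y₁ (S₁.map (.subtype _))
      rcases mem_insert.mp this with h' | h'
      · exact h'
      · exact absurd h' (notMem_map_subtype_of_neg f S₂ hy₁)
    subst hy
    have hS := congrArg (·.erase y₁) h
    simp only [erase_insert (notMem_map_subtype_of_neg f _ hy₁), map_inj] at hS
    rw [hS]

theorem choose_card_nonneg_le (d : ℕ) :
    (#{x | 0 ≤ f x}).choose d ≤
      #{Y ∈ univ.powersetCard d | 0 ≤ ∑ y ∈ Y, f y ∧ ∀ y ∈ Y, 0 ≤ f y} := by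
  rw [← card_powersetCard]
  refine card_le_card fun Y hY => ?_
  have hnonneg : ∀ y ∈ Y, 0 ≤ f y := fun y hy =>
    (mem_filter.mp ((mem_powersetCard.mp hY).1 hy)).2
  simp only [mem_filter, mem_powersetCard_univ, (mem_powersetCard.mp hY).2]
  exact ⟨trivial, sum_nonneg hnonneg, hnonneg⟩

theorem choose_card_nonneg_add_card_filter_le (k : ℕ) :
    (#{x | 0 ≤ f x}).choose (k + 1) +
        #((univ.powersetCard k ×ˢ univ).filter
        fun p : Finset {x // 0 ≤ f x} × {x // ¬0 ≤ f x} => 0 ≤ ∑ x ∈ p.1, f x + f p.2) ≤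
      #{Y ∈ univ.powersetCard (k + 1) | 0 ≤ ∑ y ∈ Y, f y} := by
  rw [← card_filter_add_card_filter_not (fun Y : Finset ι => ∀ y ∈ Y, 0 ≤ f y), filter_filter,
    filter_filter]
  exact add_le_add (choose_card_nonneg_le f _) (card_filter_nonneg_add_neg_le f k)

end SignSplit

open Finset in
theorem stmt_15_general (d n r : ℕ) (hn : 0 < n) (hdvd : d ∣ n)
    (hr : r = (d - 1) * n / d)
    (f : Fin n → ℝ) (hsum : 0 ≤ ∑ x, f x)
    (hplus : (univ.filter fun x => 0 ≤ f x).card = r) :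
    r.choose d + r.choose (d - 1) ≤
      ((univ.powersetCard d).filter fun Y => 0 ≤ ∑ y ∈ Y, f y).card := by
  obtain ⟨k, rfl⟩ : ∃ k, d = k + 1 := ⟨d - 1, by have := Nat.pos_of_dvd_of_pos hdvd hn; omega⟩
  obtain ⟨m, rfl⟩ := hdvd
  have hm : 0 < m := Nat.pos_of_mul_pos_left hn
  have hr : r = k * m := by
    rw [hr, Nat.add_sub_cancel, mul_left_comm, Nat.mul_div_cancel_left _ k.succ_pos]
  have hα : Fintype.card {x // 0 ≤ f x} = k * m := by rw [Fintype.card_subtype, hplus, hr]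
  have hβ : Fintype.card {x // ¬0 ≤ f x} = m := by
    rw [Fintype.card_subtype_compl, hα, Fintype.card_fin, add_mul, one_mul,
      Nat.add_sub_cancel_left]
  have hsplit : 0 ≤ ∑ x : {x // 0 ≤ f x}, f x + ∑ y : {x // ¬0 ≤ f x}, f y := by
    rwa [Fintype.sum_subtype_add_sum_subtype]
  calc r.choose (k + 1) + r.choose (k + 1 - 1)
      = (#{x | 0 ≤ f x}).choose (k + 1) + (k * m).choose k := by
        rw [hplus, Nat.add_sub_cancel, hr]
    _ ≤ _ := Nat.add_le_add_left (choose_le_card_filter_sum_add_nonneg hm hα hβ _ _ hsplit) _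
    _ ≤ _ := choose_card_nonneg_add_card_filter_le f k

open Finset in
theorem stmt_15 (d n r : ℕ) (hd : 2 ≤ d) (hn : 0 < n) (hdvd : d ∣ n)
    (hr : r = (d - 1) * n / d)
    (f : Fin n → ℝ) (hsum : 0 ≤ ∑ x, f x)
    (hplus : (univ.filter fun x => 0 ≤ f x).card = r) :
    r.choose d + r.choose (d - 1) ≤
      ((univ.powersetCard d).filter fun Y => 0 ≤ ∑ y ∈ Y, f y).card :=
  stmt_15_general d n r hn hdvd hr f hsum hplus
end
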